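/- arXiv:2302.12942 — 13 statements merged into one kernel-verified Lean document; each statement's English description precedes it below -/
import Mathlib

section
/- Let q be an odd prime power and let a, b ∈ F_q satisfy that ab and (a-1)(b-1) are nonzero squares in F_q. Then the q × q array L[a,b] defined by L[a,b]_{i,j} = i if j = i, L[a,b]_{i,j} = i + a(j-i) if j-i is a nonzero square, and L[a,b]_{i,j} = i + b(j-i) if j-i is a non-square, is a Latin square (each symbol occurs exactly once in each row and each column). -/
open Classical in
/-- The quadratic Latin square construction: `Lsq a b i j` equals `i` if `j = i`,
`i + a*(j-i)` if `j - i` is a (nonzero) square, and `i + b*(j-i)` otherwise. -/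
noncomputable def Lsq {F : Type*} [Field F] (a b : F) (i j : F) : F :=
  if j = i then i
  else if IsSquare (j - i) then i + a * (j - i)
  else i + b * (j - i)

open Classical in
noncomputable def phiAux {F : Type*} [Field F] (c d : F) (x : F) : F :=
  if x = 0 then 0 else if IsSquare x then c * x else d * x

lemma keyAux {F : Type*} [Field F] {c d x y : F} (hcd : IsSquare (c * d))
    (hd : d ≠ 0) (hx : IsSquare x) (hy : ¬ IsSquare y) : c * x ≠ d * y := by
  intro h
  apply hy
  have hyy : y = (c * d) * (d⁻¹ * d⁻¹) * x := by
    field_simp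
    linear_combination -h
  rw [hyy]
  exact (hcd.mul ⟨d⁻¹, rfl⟩).mul hx

lemma phiAux_inj {F : Type*} [Field F] {c d : F} (h0 : c * d ≠ 0)
    (hsq : IsSquare (c * d)) : Function.Injective (phiAux c d) := by
  have hc : c ≠ 0 := fun h => h0 (by simp [h])
  have hd : d ≠ 0 := fun h => h0 (by simp [h])
  intro x y h
  unfold phiAux at h
  rcases eq_or_ne x 0 with hx | hx <;> rcases eq_or_ne y 0 with hy | hy
  · exact hx.trans hy.symm
  · exfalso
    rw [if_pos hx, if_neg hy] at h
    split_ifs at h with hs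
    · exact mul_ne_zero hc hy h.symm
    · exact mul_ne_zero hd hy h.symm
  · exfalso
    rw [if_neg hx, if_pos hy] at h
    split_ifs at h with hs
    · exact mul_ne_zero hc hx h
    · exact mul_ne_zero hd hx h
  · rw [if_neg hx, if_neg hy] at h
    by_cases hsx : IsSquare x <;> by_cases hsy : IsSquare y <;>
      simp only [if_pos, if_neg, hsx, hsy, if_true, if_false] at h
    · exact mul_left_cancel₀ hc h
    · exact absurd h (keyAux hsq hd hsx hsy)
    · exact absurd h.symm (keyAux hsq hd hsy hsx)
    · exact mul_left_cancel₀ hd h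

/-- If `q` is an odd prime power and `ab`, `(a-1)(b-1)` are nonzero squares in `F_q`,
then `L[a,b]` is a Latin square: every row and every column is a bijection. -/
theorem stmt0 {F : Type*} [Field F] [Fintype F] (hodd : Odd (Fintype.card F))
    (a b : F)
    (hab : a * b ≠ 0 ∧ IsSquare (a * b))
    (hab1 : (a - 1) * (b - 1) ≠ 0 ∧ IsSquare ((a - 1) * (b - 1))) :
    (∀ i : F, Function.Bijective fun j => Lsq a b i j) ∧
    (∀ j : F, Function.Bijective fun i => Lsq a b i j) := by
  have h1ab0 : (1 - a) * (1 - b) ≠ 0 := by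
    intro h; apply hab1.1; linear_combination h
  have h1absq : IsSquare ((1 - a) * (1 - b)) := by
    have : (1 - a) * (1 - b) = (a - 1) * (b - 1) := by ring
    rw [this]; exact hab1.2
  have hL : ∀ i j : F, Lsq a b i j = i + phiAux a b (j - i) := by
    intro i j
    unfold Lsq phiAux
    rcases eq_or_ne j i with h | h
    · simp [h]
    · rw [if_neg h, if_neg (sub_ne_zero.mpr h)]
      split_ifs <;> ring
  have hL' : ∀ i j : F, Lsq a b i j = j - phiAux (1 - a) (1 - b) (j - i) := by
    intro i j
    rw [hL]
    unfold phiAux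
    split_ifs with h h1
    · have : j = i := by linear_combination h
      simp [this]
    · ring
    · ring
  constructor
  · intro i
    rw [← Finite.injective_iff_bijective]
    intro j1 j2 h
    simp only [hL] at h
    have := phiAux_inj hab.1 hab.2 (add_left_cancel h)
    exact sub_left_inj.mp this
  · intro j
    rw [← Finite.injective_iff_bijective]
    intro i1 i2 h
    simp only [hL'] at h
    have := phiAux_inj h1ab0 h1absq (sub_right_inj.mp h)
    exact sub_right_inj.mp this
end

section
/- Let q be an odd prime power. The number of pairs (a,b) ∈ F_q × F_q such that ab and (a-1)(b-1) are both nonzero squares in F_q equals (q-3)(q-5)/4 + q - 2. -/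
open Finset

/-- For an odd prime power `q`, the number of valid pairs `(a,b) ∈ F_q²`
(i.e. with `ab` and `(a-1)(b-1)` nonzero squares) is `(q-3)(q-5)/4 + q - 2`. -/
theorem stmt1 {F : Type*} [Field F] [Fintype F] (hodd : Odd (Fintype.card F)) :
    Nat.card {p : F × F //
      (p.1 * p.2 ≠ 0 ∧ IsSquare (p.1 * p.2)) ∧
      ((p.1 - 1) * (p.2 - 1) ≠ 0 ∧ IsSquare ((p.1 - 1) * (p.2 - 1)))} =
    (Fintype.card F - 3) * (Fintype.card F - 5) / 4 + Fintype.card F - 2 := by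
  classical
  rw [Nat.odd_iff] at hodd
  set q := Fintype.card F with hq
  have hchar : ringChar F ≠ 2 := by
    intro h
    have := FiniteField.even_card_of_char_two h
    omega
  set S : Finset F := ({0, 1} : Finset F)ᶜ with hS
  have memS : ∀ a : F, a ∈ S ↔ a ≠ 0 ∧ a ≠ 1 := by
    intro a; simp [hS, not_or]
  have hScard : S.card = q - 2 := by
    rw [hS, card_compl, card_pair (zero_ne_one)]
  have hsum0 : ∑ a : F, quadraticChar F a = 0 := quadraticChar_sum_zero hchar
  have hsub : ∀ f : F → ℤ, (∑ a : F, f a = 0) → ∑ a ∈ S, f a = -(f 0 + f 1) := by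
    intro f hf
    have h2 : ∑ a ∈ ({0,1} : Finset F), f a = f 0 + f 1 := sum_pair zero_ne_one
    have h3 := Finset.sum_add_sum_compl ({0,1} : Finset F) f
    rw [hf, h2] at h3
    rw [hS]; linarith
  have hA : ∑ a ∈ S, quadraticChar F a = -1 := by
    have := hsub (fun a => quadraticChar F a) hsum0
    simpa [quadraticChar_zero] using this
  have hB : ∑ a ∈ S, quadraticChar F (a - 1) = -quadraticChar F (-1) := by
    have huniv : ∑ a : F, quadraticChar F (a - 1) = 0 := by
      rw [← hsum0]
      exact Fintype.sum_equiv (Equiv.subRight (1 : F)) _ _ (fun a => rfl)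
    have := hsub (fun a => quadraticChar F (a - 1)) huniv
    simpa [quadraticChar_zero] using this
  have hC : ∑ a ∈ S, quadraticChar F a * quadraticChar F (a - 1) = -1 := by
    rw [← hA]
    refine Finset.sum_bij' (fun a _ => 1 - a⁻¹) (fun y _ => (1 - y)⁻¹) ?_ ?_ ?_ ?_ ?_
    · intro a ha
      rw [memS] at ha ⊢
      refine ⟨?_, ?_⟩
      · simp only [ne_eq, sub_eq_zero]
        intro h
        exact ha.2 (inv_eq_one.mp h.symm)
      · simp only [ne_eq, sub_eq_self, inv_eq_zero]
        exact ha.1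
    · intro y hy
      rw [memS] at hy ⊢
      refine ⟨?_, ?_⟩
      · simp only [ne_eq, inv_eq_zero, sub_eq_zero]
        exact fun h => hy.2 h.symm
      · simp only [ne_eq, inv_eq_one, sub_eq_self]
        exact hy.1
    · intro a ha
      simp only [sub_sub_cancel, inv_inv]
    · intro y hy
      simp only [inv_inv, sub_sub_cancel]
    · intro a ha
      rw [memS] at ha
      have h2 : a * (a - 1) = a ^ 2 * (1 - a⁻¹) := by
        field_simp [ha.1]
      rw [← map_mul, h2, map_mul, quadraticChar_sq_one' ha.1, one_mul]
  set P : F × F → Prop := fun p =>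
      (p.1 * p.2 ≠ 0 ∧ IsSquare (p.1 * p.2)) ∧
      ((p.1 - 1) * (p.2 - 1) ≠ 0 ∧ IsSquare ((p.1 - 1) * (p.2 - 1))) with hP
  have hfilter : (univ.filter P) = (S ×ˢ S).filter P := by
    ext p
    simp only [mem_filter, mem_univ, true_and, mem_product, memS]
    constructor
    · intro hp
      obtain ⟨⟨hab, -⟩, ⟨hab1, -⟩⟩ := id hp
      refine ⟨⟨⟨?_, ?_⟩, ?_, ?_⟩, hp⟩
      · exact fun h => hab (by rw [h, zero_mul])
      · intro h
        exact hab1 (by rw [h, sub_self, zero_mul])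
      · exact fun h => hab (by rw [h, mul_zero])
      · intro h
        exact hab1 (by rw [h, sub_self, mul_zero])
    · exact fun h => h.2
  have hmain : ∑ a ∈ S, ∑ b ∈ S,
      (1 + quadraticChar F a * quadraticChar F b) *
        (1 + quadraticChar F (a - 1) * quadraticChar F (b - 1))
      = 4 * ((univ.filter P).card : ℤ) := by
    rw [← Finset.sum_product']
    have step : ∀ p ∈ S ×ˢ S,
        (1 + quadraticChar F p.1 * quadraticChar F p.2) *
          (1 + quadraticChar F (p.1 - 1) * quadraticChar F (p.2 - 1))
        = if P p then 4 else 0 := by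
      rintro ⟨a, b⟩ hp
      rw [mem_product, memS, memS] at hp
      obtain ⟨⟨ha0, ha1⟩, hb0, hb1⟩ := hp
      have hab : a * b ≠ 0 := mul_ne_zero ha0 hb0
      have hab1 : (a - 1) * (b - 1) ≠ 0 :=
        mul_ne_zero (sub_ne_zero.mpr ha1) (sub_ne_zero.mpr hb1)
      rw [← map_mul, ← map_mul]
      by_cases h1 : IsSquare (a * b) <;> by_cases h2 : IsSquare ((a - 1) * (b - 1))
      · rw [(quadraticChar_one_iff_isSquare hab).mpr h1,
          (quadraticChar_one_iff_isSquare hab1).mpr h2,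
          if_pos ⟨⟨hab, h1⟩, hab1, h2⟩]
        norm_num
      · rw [(quadraticChar_one_iff_isSquare hab).mpr h1,
          quadraticChar_neg_one_iff_not_isSquare.mpr h2,
          if_neg (by rintro ⟨-, -, h⟩; exact h2 h)]
        norm_num
      · rw [quadraticChar_neg_one_iff_not_isSquare.mpr h1,
          if_neg (by rintro ⟨⟨-, h⟩, -⟩; exact h1 h)]
        norm_num
      · rw [quadraticChar_neg_one_iff_not_isSquare.mpr h1,
          if_neg (by rintro ⟨⟨-, h⟩, -⟩; exact h1 h)]
        norm_num
    rw [Finset.sum_congr rfl step, ← Finset.sum_filter, ← hfilter,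
      Finset.sum_const, nsmul_eq_mul, mul_comm]
  have hexpand : ∑ a ∈ S, ∑ b ∈ S,
      (1 + quadraticChar F a * quadraticChar F b) *
        (1 + quadraticChar F (a - 1) * quadraticChar F (b - 1))
      = ((S.card : ℤ)) * S.card + (∑ a ∈ S, quadraticChar F a) * (∑ a ∈ S, quadraticChar F a)
        + (∑ a ∈ S, quadraticChar F (a - 1)) * (∑ a ∈ S, quadraticChar F (a - 1))
        + (∑ a ∈ S, quadraticChar F a * quadraticChar F (a - 1)) *
            (∑ a ∈ S, quadraticChar F a * quadraticChar F (a - 1)) := by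
    rw [Finset.sum_mul_sum, Finset.sum_mul_sum, Finset.sum_mul_sum]
    have hcst : ((S.card : ℤ)) * S.card = ∑ a ∈ S, ∑ b ∈ S, (1 : ℤ) := by
      simp [Finset.sum_const, mul_comm]
    rw [hcst, ← Finset.sum_add_distrib, ← Finset.sum_add_distrib,
      ← Finset.sum_add_distrib]
    refine Finset.sum_congr rfl fun a _ => ?_
    rw [← Finset.sum_add_distrib, ← Finset.sum_add_distrib, ← Finset.sum_add_distrib]
    refine Finset.sum_congr rfl fun b _ => ?_
    ring
  have hsq : quadraticChar F (-1) * quadraticChar F (-1) = 1 := by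
    have : (-1 : F) ≠ 0 := neg_ne_zero.mpr one_ne_zero
    have h := quadraticChar_sq_one this
    rwa [sq] at h
  have hq3 : 3 ≤ q := by
    have h2 : 1 < q := Fintype.one_lt_card
    omega
  have hZ : 4 * ((univ.filter P).card : ℤ) = ((q : ℤ) - 2) * ((q : ℤ) - 2) + 3 := by
    rw [← hmain, hexpand, hA, hB, hC, hScard]
    have : ((q - 2 : ℕ) : ℤ) = (q : ℤ) - 2 := by
      push_cast [Nat.cast_sub (by omega : 2 ≤ q)]; ring
    rw [this]
    linear_combination hsq
  have hNat : 4 * (univ.filter P).card = (q - 2) * (q - 2) + 3 := by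
    have : ((4 * (univ.filter P).card : ℕ) : ℤ) = (((q - 2) * (q - 2) + 3 : ℕ) : ℤ) := by
      push_cast [Nat.cast_sub (by omega : 2 ≤ q)]
      linear_combination hZ
    exact_mod_cast this
  have hcount : Nat.card {p : F × F // P p} = (univ.filter P).card := by
    rw [Nat.card_eq_fintype_card, Fintype.card_subtype]
  rw [show (Nat.card {p : F × F //
      (p.1 * p.2 ≠ 0 ∧ IsSquare (p.1 * p.2)) ∧
      ((p.1 - 1) * (p.2 - 1) ≠ 0 ∧ IsSquare ((p.1 - 1) * (p.2 - 1)))}) =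
      Nat.card {p : F × F // P p} from rfl, hcount]
  -- final arithmetic
  rcases Nat.lt_or_ge q 5 with h5 | h5
  · have : q = 3 := by omega
    rw [this] at hNat ⊢
    omega
  · obtain ⟨r, hr⟩ : ∃ r, q = 2 * r + 5 := ⟨(q - 5) / 2, by omega⟩
    rw [hr] at hNat ⊢
    have e1 : 2 * r + 5 - 3 = 2 * r + 2 := by omega
    have e2 : 2 * r + 5 - 5 = 2 * r := by omega
    have e3 : 2 * r + 5 - 2 = 2 * r + 3 := by omega
    rw [e1, e2]
    have e4 : (2 * r + 2) * (2 * r) = 4 * (r * r + r) := by ring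
    rw [e4, Nat.mul_div_cancel_left _ (by norm_num : 0 < 4)]
    rw [e3] at hNat
    have e5 : (2 * r + 3) * (2 * r + 3) + 3 = 4 * (r * r) + 12 * r + 12 := by ring
    rw [e5] at hNat
    omega
end

section
/- Let L be an idempotent, involutory Latin square with symbol set S, let i ≠ j in S, and let r = r_{i,j} be the row permutation defined by r(L_{i,k}) = L_{j,k} for all k ∈ S. If r contains the cycle (x_0, x_1, ..., x_k), then r also contains the cycle (L_{i,x_k}, L_{i,x_{k-1}}, ..., L_{i,x_0}). -/
/-- Let `L` be an idempotent, involutory Latin square, `i ≠ j`, and `r = r_{i,j}`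
the row permutation with `r (L i k) = L j k`.  If `r` contains the cycle
`(x_0, …, x_k)` then it also contains the cycle `(L_{i,x_k}, …, L_{i,x_0})`,
i.e. `r (L i (x m)) = L i (x (m-1))` for all `m`. -/
theorem stmt2 {S : Type*} (L : S → S → S)
    (hrow : ∀ i, Function.Bijective (L i))
    (hcol : ∀ j, Function.Bijective fun i => L i j)
    (hidem : ∀ i, L i i = i)
    (hinv : ∀ i j, L i (L i j) = j)
    (i j : S) (hij : i ≠ j)
    (r : Equiv.Perm S) (hr : ∀ k, r (L i k) = L j k)
    (k : ℕ) (x : ZMod (k + 1) → S)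
    (hcyc : ∀ m, r (x m) = x (m + 1)) :
    ∀ m : ZMod (k + 1), r (L i (x m)) = L i (x (m - 1)) := by
  intro m
  have h1 : r (x (m - 1)) = x m := by simpa using hcyc (m - 1)
  have h2 : L j (L i (x (m - 1))) = x m := by
    rw [← hr, hinv, h1]
  calc r (L i (x m)) = L j (x m) := hr _
    _ = L j (L j (L i (x (m - 1)))) := by rw [h2]
    _ = L i (x (m - 1)) := hinv _ _
end

section
/- Let L be an idempotent, involutory Latin square with symbol set S, let i ≠ j in S, and let r = r_{i,j}. If X = (x_0, x_1, ..., x_k) is a cycle of r containing the element i, then k is even, and writing x_0 = i, we have L_{i, x_{k/2}} = j. -/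
/-- Let `L` be an idempotent, involutory Latin square, `i ≠ j`, `r = r_{i,j}`.
If `(x_0, …, x_k)` is a cycle of `r` with `x_0 = i`, then `k` is even and
`L i (x (k/2)) = j`. -/
theorem stmt3 {S : Type*} (L : S → S → S)
    (hrow : ∀ i, Function.Bijective (L i))
    (hcol : ∀ j, Function.Bijective fun i => L i j)
    (hidem : ∀ i, L i i = i)
    (hinv : ∀ i j, L i (L i j) = j)
    (i j : S) (hij : i ≠ j)
    (r : Equiv.Perm S) (hr : ∀ k, r (L i k) = L j k)
    (k : ℕ) (x : ZMod (k + 1) → S)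
    (hx : Function.Injective x)
    (hcyc : ∀ m, r (x m) = x (m + 1))
    (h0 : x 0 = i) :
    Even k ∧ L i (x ((k / 2 : ℕ) : ZMod (k + 1))) = j := by
  haveI : NeZero (k + 1) := ⟨Nat.succ_ne_zero k⟩
  -- only fixed point of L a is a
  have hfix : ∀ a s, L a s = s → s = a := by
    intro a s h
    exact ((hcol s).1 (h.trans (hidem s).symm)).symm
  -- r s = L j (L i s)
  have hrs : ∀ s, r s = L j (L i s) := by
    intro s
    conv_lhs => rw [← hinv i s]
    exact hr _
  -- L j (r s) = L i s
  have hLj : ∀ s, L j (r s) = L i s := by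
    intro s; rw [hrs, hinv]
  -- L i (r s) = r.symm (L i s)
  have hLi : ∀ s, L i (r s) = r.symm (L i s) := by
    intro s
    apply r.injective
    rw [Equiv.apply_symm_apply, hrs, hinv]
    exact hLj s
  -- r.symm undoes the cycle
  have hcyc' : ∀ m : ZMod (k + 1), r.symm (x m) = x (m - 1) := by
    intro m
    apply r.injective
    rw [Equiv.apply_symm_apply, hcyc, sub_add_cancel]
  -- key lemma 1 : L i (x m) = x (-m)
  have key1n : ∀ n : ℕ, L i (x (n : ZMod (k + 1))) = x (-(n : ZMod (k + 1))) := by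
    intro n
    induction n with
    | zero => simp only [Nat.cast_zero, neg_zero, h0, hidem]
    | succ n ih =>
      have hc : ((n + 1 : ℕ) : ZMod (k + 1)) = (n : ZMod (k + 1)) + 1 := by push_cast; ring
      rw [hc, ← hcyc, hLi, ih, hcyc']
      congr 1
      ring
  have key1 : ∀ m : ZMod (k + 1), L i (x m) = x (-m) := by
    intro m
    obtain ⟨n, rfl⟩ := ZMod.natCast_rightInverse.surjective m
    exact key1n n
  -- key lemma 2 : L j (x m) = x (1 - m)
  have key2 : ∀ m : ZMod (k + 1), L j (x m) = x (1 - m) := by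
    intro m
    have h := hLj (x (m - 1))
    rw [hcyc, sub_add_cancel, key1] at h
    rw [h]
    congr 1
    ring
  have hev : Even k := by
    by_contra hodd
    obtain ⟨t, rfl⟩ := Nat.not_even_iff_odd.1 hodd
    set m : ZMod (2 * t + 1 + 1) := ((t + 1 : ℕ) : ZMod (2 * t + 1 + 1)) with hm
    have hm0 : m + m = 0 := by
      rw [hm]
      have : ((t + 1 : ℕ) : ZMod (2 * t + 1 + 1)) + ((t + 1 : ℕ) : ZMod (2 * t + 1 + 1)) =
          ((2 * t + 1 + 1 : ℕ) : ZMod (2 * t + 1 + 1)) := by push_cast; ring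
      rw [this, ZMod.natCast_self]
    have hfixi : x m = i := by
      apply hfix
      rw [key1, neg_eq_of_add_eq_zero_left hm0]
    have hm00 : m = 0 := hx (by rw [hfixi, h0])
    rw [hm] at hm00
    have hd := (ZMod.natCast_eq_zero_iff _ _).1 hm00
    have := Nat.le_of_dvd (by omega) hd
    omega
  refine ⟨hev, ?_⟩
  obtain ⟨t, rfl⟩ := hev
  have hdiv : (t + t) / 2 = t := by omega
  rw [hdiv]
  -- j = x (t+1)
  have hone : ((t + 1 : ℕ) : ZMod (t + t + 1)) + ((t + 1 : ℕ) : ZMod (t + t + 1)) = 1 := by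
    have : ((t + 1 : ℕ) : ZMod (t + t + 1)) + ((t + 1 : ℕ) : ZMod (t + t + 1)) =
        ((t + t + 1 : ℕ) : ZMod (t + t + 1)) + 1 := by push_cast; ring
    rw [this, ZMod.natCast_self, zero_add]
  have hxj : x ((t + 1 : ℕ) : ZMod (t + t + 1)) = j := by
    apply hfix
    rw [key2]
    congr 1
    linear_combination -hone
  have hneg : -((t : ℕ) : ZMod (t + t + 1)) = ((t + 1 : ℕ) : ZMod (t + t + 1)) := by
    have : ((t : ℕ) : ZMod (t + t + 1)) + ((t + 1 : ℕ) : ZMod (t + t + 1)) =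
        ((t + t + 1 : ℕ) : ZMod (t + t + 1)) := by push_cast; ring
    rw [neg_eq_iff_add_eq_zero, this, ZMod.natCast_self]
  rw [key1, hneg, hxj]
end

section
/- Let L be an idempotent, involutory Latin square with symbol set S, let i ≠ j in S, and r = r_{i,j}. A cycle (x_0,...,x_k) of r coincides (as a cyclic sequence) with the cycle (L_{i,x_k}, L_{i,x_{k-1}}, ..., L_{i,x_0}) if and only if x_ℓ = i for some ℓ ∈ {0,1,...,k}. -/
lemma zmod_half (k : ℕ) (c : ZMod (k + 1)) :
    (∃ n : ZMod (k + 1), n + n = c) ∨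
    (∃ n h : ZMod (k + 1), n + n = c + 1 ∧ h ≠ 0 ∧ h + h = 0) := by
  have hvc : ((c.val : ℕ) : ZMod (k + 1)) = c := ZMod.natCast_rightInverse c
  have hv : c.val < k + 1 := ZMod.val_lt c
  rcases Nat.even_or_odd c.val with he | ho
  · left
    refine ⟨((c.val / 2 : ℕ) : ZMod (k + 1)), ?_⟩
    have h2 : (c.val / 2) + (c.val / 2) = c.val := by rcases he with ⟨u, hu⟩; omega
    rw [← Nat.cast_add, h2, hvc]
  rcases Nat.even_or_odd (k + 1) with hN | hN
  · right
    refine ⟨((c.val + 1) / 2 : ℕ), (((k + 1) / 2 : ℕ) : ZMod (k + 1)), ?_, ?_, ?_⟩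
    · have h2 : (c.val + 1) / 2 + (c.val + 1) / 2 = c.val + 1 := by
        rcases ho with ⟨u, hu⟩; omega
      rw [← Nat.cast_add, h2, Nat.cast_add, hvc, Nat.cast_one]
    · intro h0
      have hlt : (k + 1) / 2 < k + 1 := by omega
      have := ZMod.val_cast_of_lt hlt
      rw [h0, ZMod.val_zero] at this
      rcases hN with ⟨t, ht⟩; omega
    · have h2 : (k + 1) / 2 + (k + 1) / 2 = k + 1 := by
        rcases hN with ⟨t, ht⟩; omega
      rw [← Nat.cast_add, h2, ZMod.natCast_self]
  · left
    refine ⟨(((c.val + (k + 1)) / 2 : ℕ) : ZMod (k + 1)), ?_⟩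
    have h2 : (c.val + (k + 1)) / 2 + (c.val + (k + 1)) / 2 = c.val + (k + 1) := by
      rcases hN with ⟨t, ht⟩; rcases ho with ⟨u, hu⟩; omega
    rw [← Nat.cast_add, h2, Nat.cast_add, hvc, ZMod.natCast_self, add_zero]

/-- Let `L` be an idempotent, involutory Latin square, `i ≠ j`, `r = r_{i,j}`.
A cycle `(x_0, …, x_k)` of `r` coincides (as a cyclic sequence) with the cycle
`(L_{i,x_k}, L_{i,x_{k-1}}, …, L_{i,x_0})` if and only if `x_ℓ = i` for some `ℓ`. -/
theorem stmt4 {S : Type*} (L : S → S → S)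
    (hrow : ∀ i, Function.Bijective (L i))
    (hcol : ∀ j, Function.Bijective fun i => L i j)
    (hidem : ∀ i, L i i = i)
    (hinv : ∀ i j, L i (L i j) = j)
    (i j : S) (hij : i ≠ j)
    (r : Equiv.Perm S) (hr : ∀ k, r (L i k) = L j k)
    (k : ℕ) (x : ZMod (k + 1) → S)
    (hx : Function.Injective x)
    (hcyc : ∀ m, r (x m) = x (m + 1)) :
    (∃ s : ZMod (k + 1), ∀ m, L i (x (-1 - m)) = x (m + s)) ↔ ∃ ℓ, x ℓ = i := by
  have fixi : ∀ y, L i y = y → y = i := by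
    intro y hy
    have h1 : (fun a => L a y) i = (fun a => L a y) y := by
      simp only [hidem, hy]
    exact ((hcol y).1 h1).symm
  have fixj : ∀ y, L j y = y → y = j := by
    intro y hy
    have h1 : (fun a => L a y) j = (fun a => L a y) y := by
      simp only [hidem, hy]
    exact ((hcol y).1 h1).symm
  constructor
  · rintro ⟨s, hs⟩
    have key : ∀ n : ZMod (k + 1), L i (x n) = x (s - 1 - n) := by
      intro n
      have h1 := hs (-1 - n)
      have e1 : (-1 : ZMod (k + 1)) - (-1 - n) = n := by ring
      have e2 : (-1 : ZMod (k + 1)) - n + s = s - 1 - n := by ring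
      rw [e1, e2] at h1
      exact h1
    have key2 : ∀ n : ZMod (k + 1), L j (x n) = x (s - n) := by
      intro n
      have h1 : r (L i (x n)) = L j (x n) := hr (x n)
      rw [key n, hcyc] at h1
      have e : s - 1 - n + 1 = s - n := by ring
      rw [e] at h1
      exact h1.symm
    rcases zmod_half k (s - 1) with ⟨n, hn⟩ | ⟨n, h, hn, hh0, hh⟩
    · refine ⟨n, fixi _ ?_⟩
      rw [key n, show s - 1 - n = n by linear_combination -hn]
    · exfalso
      have hn' : n + n = s := by rw [hn]; ring
      have h1 : x n = j := fixj _ (by rw [key2 n, show s - n = n by linear_combination -hn'])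
      have h2 : x (n + h) = j := fixj _
        (by rw [key2 (n + h), show s - (n + h) = n + h by linear_combination -hn' - hh])
      have := hx (h1.trans h2.symm)
      apply hh0
      linear_combination -this
  · rintro ⟨ℓ, hℓ⟩
    refine ⟨ℓ + ℓ + 1, ?_⟩
    have claim : ∀ t : ℕ, L i (x (ℓ + (t : ZMod (k + 1)))) = x (ℓ - (t : ZMod (k + 1))) := by
      intro t
      induction t with
      | zero => simpa [hℓ] using hidem i
      | succ t ih =>
        have e1 : ℓ + ((t + 1 : ℕ) : ZMod (k + 1)) = (ℓ + (t : ZMod (k + 1))) + 1 := by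
          push_cast; ring
        have e2 : ℓ - ((t + 1 : ℕ) : ZMod (k + 1)) = (ℓ - (t : ZMod (k + 1))) - 1 := by
          push_cast; ring
        rw [e1, e2]
        -- x (ℓ + t) = L i (x (ℓ - t))
        have h1 : x (ℓ + (t : ZMod (k + 1))) = L i (x (ℓ - (t : ZMod (k + 1)))) := by
          rw [← ih, hinv]
        have h2 : x (ℓ + (t : ZMod (k + 1)) + 1) = L j (x (ℓ - (t : ZMod (k + 1)))) := by
          rw [← hcyc, h1, hr]
        apply r.injective
        rw [h2, hr, hinv, hcyc]
        congr 1
        ring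
    intro m
    set n : ZMod (k + 1) := -1 - m with hn
    have hvn : ((n - ℓ).val : ZMod (k + 1)) = n - ℓ := ZMod.natCast_rightInverse _
    have h1 := claim (n - ℓ).val
    rw [hvn] at h1
    have e1 : ℓ + (n - ℓ) = n := by ring
    have e2 : ℓ - (n - ℓ) = m + (ℓ + ℓ + 1) := by rw [hn]; ring
    rw [e1, e2] at h1
    exact h1
end

section
/- Let q be an odd prime power, (a,b) a valid pair in F_q^2 (i.e., ab and (a-1)(b-1) are nonzero squares), and define φ[a,b] : F_q → F_q by φ(0)=0, φ(x)=ax if x is a nonzero square, φ(x)=bx if x is a non-square. Then φ[a,b] is a bijection, and its inverse is φ[a^{-1}, b^{-1}] if a is a nonzero square, and φ[b^{-1}, a^{-1}] if a is a non-square. -/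
open Classical in
/-- The quadratic orthomorphism map: `0 ↦ 0`, `x ↦ a*x` if `x` is a (nonzero)
square, `x ↦ b*x` otherwise. -/
noncomputable def phi {F : Type*} [Field F] (a b : F) (x : F) : F :=
  if x = 0 then 0 else if IsSquare x then a * x else b * x

open Classical in
lemma sq_mul_lemma {F : Type*} [Field F] [Fintype F] (hodd : Odd (Fintype.card F))
    {x y : F} (hx : x ≠ 0) (hy : y ≠ 0) :
    (IsSquare (x * y) ↔ (IsSquare x ↔ IsSquare y)) := by
  have hF : ringChar F ≠ 2 := by
    intro h
    have := FiniteField.even_card_of_char_two h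
    simp [Nat.even_iff, Nat.odd_iff] at this hodd
    omega
  have hxy : x * y ≠ 0 := mul_ne_zero hx hy
  rw [← quadraticChar_one_iff_isSquare hxy, ← quadraticChar_one_iff_isSquare hx,
    ← quadraticChar_one_iff_isSquare hy, map_mul]
  rcases quadraticChar_dichotomy hx with h1 | h1 <;>
    rcases quadraticChar_dichotomy hy with h2 | h2 <;>
      simp [h1, h2]

open Classical in
lemma phi_L1 {F : Type*} [Field F] [Fintype F] (hodd : Odd (Fintype.card F))
    {a b : F} (ha : a ≠ 0) (hb : b ≠ 0) (hA : IsSquare a) (hB : IsSquare b) :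
    Function.LeftInverse (phi a⁻¹ b⁻¹) (phi a b) := by
  intro x
  unfold phi
  by_cases hx : x = 0
  · simp [hx]
  by_cases hs : IsSquare x
  · have hax : a * x ≠ 0 := mul_ne_zero ha hx
    have h2 : IsSquare (a * x) := (sq_mul_lemma hodd ha hx).mpr (iff_of_true hA hs)
    simp [hx, hs, hax, h2, ← mul_assoc, inv_mul_cancel₀ ha]
  · have hbx : b * x ≠ 0 := mul_ne_zero hb hx
    have h2 : ¬ IsSquare (b * x) := fun h => hs (((sq_mul_lemma hodd hb hx).mp h).mp hB)
    simp [hx, hs, hbx, h2, ← mul_assoc, inv_mul_cancel₀ hb]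

open Classical in
lemma phi_L2 {F : Type*} [Field F] [Fintype F] (hodd : Odd (Fintype.card F))
    {a b : F} (ha : a ≠ 0) (hb : b ≠ 0) (hA : ¬ IsSquare a) (hB : ¬ IsSquare b) :
    Function.LeftInverse (phi b⁻¹ a⁻¹) (phi a b) := by
  intro x
  unfold phi
  by_cases hx : x = 0
  · simp [hx]
  by_cases hs : IsSquare x
  · have hax : a * x ≠ 0 := mul_ne_zero ha hx
    have h2 : ¬ IsSquare (a * x) := fun h => hA (((sq_mul_lemma hodd ha hx).mp h).mpr hs)
    simp [hx, hs, hax, h2, ← mul_assoc, inv_mul_cancel₀ ha]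
  · have hbx : b * x ≠ 0 := mul_ne_zero hb hx
    have h2 : IsSquare (b * x) := (sq_mul_lemma hodd hb hx).mpr (iff_of_false hB hs)
    simp [hx, hs, hbx, h2, ← mul_assoc, inv_mul_cancel₀ hb]

/-- For a valid pair `(a,b)`, `φ[a,b]` is a bijection; its inverse is
`φ[a⁻¹,b⁻¹]` if `a` is a square and `φ[b⁻¹,a⁻¹]` if `a` is a non-square. -/
theorem stmt5 {F : Type*} [Field F] [Fintype F] (hodd : Odd (Fintype.card F))
    (a b : F)
    (hab : a * b ≠ 0 ∧ IsSquare (a * b))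
    (hab1 : (a - 1) * (b - 1) ≠ 0 ∧ IsSquare ((a - 1) * (b - 1))) :
    Function.Bijective (phi a b) ∧
    (IsSquare a →
      Function.LeftInverse (phi a⁻¹ b⁻¹) (phi a b) ∧
      Function.RightInverse (phi a⁻¹ b⁻¹) (phi a b)) ∧
    (¬ IsSquare a →
      Function.LeftInverse (phi b⁻¹ a⁻¹) (phi a b) ∧
      Function.RightInverse (phi b⁻¹ a⁻¹) (phi a b)) := by
  have ha : a ≠ 0 := fun h => hab.1 (by simp [h])
  have hb : b ≠ 0 := fun h => hab.1 (by simp [h])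
  have hiff : IsSquare a ↔ IsSquare b := (sq_mul_lemma hodd ha hb).mp hab.2
  have case1 : IsSquare a →
      Function.LeftInverse (phi a⁻¹ b⁻¹) (phi a b) ∧
      Function.RightInverse (phi a⁻¹ b⁻¹) (phi a b) := by
    intro hA
    have hB := hiff.mp hA
    refine ⟨phi_L1 hodd ha hb hA hB, ?_⟩
    have := phi_L1 hodd (inv_ne_zero ha) (inv_ne_zero hb) hA.inv hB.inv
    rwa [inv_inv, inv_inv] at this
  have case2 : ¬ IsSquare a →
      Function.LeftInverse (phi b⁻¹ a⁻¹) (phi a b) ∧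
      Function.RightInverse (phi b⁻¹ a⁻¹) (phi a b) := by
    intro hA
    have hB := fun h => hA (hiff.mpr h)
    refine ⟨phi_L2 hodd ha hb hA hB, ?_⟩
    have hA' : ¬ IsSquare b⁻¹ := fun h => hB (by simpa using h.inv)
    have hB' : ¬ IsSquare a⁻¹ := fun h => hA (by simpa using h.inv)
    have := phi_L2 hodd (inv_ne_zero hb) (inv_ne_zero ha) hA' hB'
    rwa [inv_inv, inv_inv] at this
  refine ⟨?_, case1, case2⟩
  by_cases hA : IsSquare a
  · exact ⟨(case1 hA).1.injective, (case1 hA).2.surjective⟩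
  · exact ⟨(case2 hA).1.injective, (case2 hA).2.surjective⟩
end

section
/- Let q be an odd prime power, (a,b) a valid pair with a a nonzero square in F_q, φ = φ[a,b] the associated quadratic orthomorphism-type bijection, and α the permutation of F_q defined by α(j) = φ(φ^{-1}(j) - 1) + 1. Then α(a) = 1; moreover if α(α(a)) = a, then a = 1 or b = -a. In particular, if b ∉ {2-a, a/(2a-1), -a} and a ≠ 1, then the cycle of α containing a is not a 2-cycle. -/
/-- The row permutation `r_{0,1}` of the quadratic Latin square `L[a,b]`:
`α(j) = φ(φ⁻¹(j) - 1) + 1`. -/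
noncomputable def alphaP {F : Type*} [Field F] (a b : F) (j : F) : F :=
  phi a b (Function.invFun (phi a b) j - 1) + 1

/-- If `(a,b)` is a valid pair with `a` a nonzero square, then `α(a) = 1`;
if `α²(a) = a` then `a = 1` or `b = -a`; in particular if
`b ∉ {2-a, a/(2a-1), -a}` and `a ≠ 1` then the cycle of `α` containing `a`
is not a transposition. -/
theorem stmt6 {F : Type*} [Field F] [Fintype F] (hodd : Odd (Fintype.card F))
    (a b : F)
    (hab : a * b ≠ 0 ∧ IsSquare (a * b))
    (hab1 : (a - 1) * (b - 1) ≠ 0 ∧ IsSquare ((a - 1) * (b - 1)))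
    (ha : IsSquare a) :
    alphaP a b a = 1 ∧
    (alphaP a b (alphaP a b a) = a → a = 1 ∨ b = -a) ∧
    (b ≠ 2 - a → b ≠ a / (2 * a - 1) → b ≠ -a → a ≠ 1 →
      alphaP a b (alphaP a b a) ≠ a) := by
  obtain ⟨habne, habsq⟩ := hab
  obtain ⟨hab1ne, _⟩ := hab1
  have ha0 : a ≠ 0 := fun h => habne (by simp [h])
  have hb0 : b ≠ 0 := fun h => habne (by simp [h])
  have ha1 : a ≠ 1 := fun h => hab1ne (by simp [h])
  have h2 : (2 : F) ≠ 0 := by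
    intro h
    have hr : ringChar F = 2 := by
      have := (CharP.charP_iff_prime_eq_zero (p := 2) Nat.prime_two).mpr (by exact_mod_cast h)
      exact (ringChar.eq F 2).symm ▸ (ringChar.eq_iff.mpr this)
    have := FiniteField.even_card_of_char_two hr
    obtain ⟨k, hk⟩ := hodd
    omega
  have hainv : IsSquare (a⁻¹) := by
    obtain ⟨r, hr⟩ := ha
    exact ⟨r⁻¹, by rw [hr]; rw [mul_inv]⟩
  have hb : IsSquare b := by
    have hbe : b = a⁻¹ * (a * b) := by field_simp
    rw [hbe]; exact hainv.mul habsq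
  have hbinv : IsSquare (b⁻¹) := by
    obtain ⟨r, hr⟩ := hb
    exact ⟨r⁻¹, by rw [hr]; rw [mul_inv]⟩
  -- injectivity of phi
  have hinj : Function.Injective (phi a b) := by
    intro x y hxy
    unfold phi at hxy
    by_cases hx : x = 0
    · by_cases hy : y = 0
      · rw [hx, hy]
      · rw [hx] at hxy ⊢
        rw [if_pos rfl, if_neg hy] at hxy
        split_ifs at hxy with hs
        · exact absurd hxy.symm (mul_ne_zero ha0 hy)
        · exact absurd hxy.symm (mul_ne_zero hb0 hy)
    · by_cases hy : y = 0
      · rw [hy] at hxy ⊢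
        rw [if_pos rfl, if_neg hx] at hxy
        split_ifs at hxy with hs
        · exact absurd hxy (mul_ne_zero ha0 hx)
        · exact absurd hxy (mul_ne_zero hb0 hx)
      · simp only [if_neg hx, if_neg hy] at hxy
        by_cases hsx : IsSquare x <;> by_cases hsy : IsSquare y
        · rw [if_pos hsx, if_pos hsy] at hxy
          exact mul_left_cancel₀ ha0 hxy
        · rw [if_pos hsx, if_neg hsy] at hxy
          exfalso
          apply hsy
          have : y = b⁻¹ * (a * x) := by
            field_simp [hxy]
            linear_combination -hxy
          rw [this]
          exact hbinv.mul (ha.mul hsx)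
        · rw [if_neg hsx, if_pos hsy] at hxy
          exfalso
          apply hsx
          have : x = b⁻¹ * (a * y) := by
            field_simp [← hxy]
            linear_combination hxy
          rw [this]
          exact hbinv.mul (ha.mul hsy)
        · rw [if_neg hsx, if_neg hsy] at hxy
          exact mul_left_cancel₀ hb0 hxy
  have hphi1 : phi a b 1 = a := by
    simp [phi, IsSquare.one]
  have hinva : Function.invFun (phi a b) a = 1 := by
    have := Function.leftInverse_invFun hinj 1
    rwa [hphi1] at this
  have hphiainv : phi a b a⁻¹ = 1 := by
    rw [phi, if_neg (inv_ne_zero ha0), if_pos hainv, mul_inv_cancel₀ ha0]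
  have hinv1 : Function.invFun (phi a b) 1 = a⁻¹ := by
    have := Function.leftInverse_invFun hinj a⁻¹
    rwa [hphiainv] at this
  have hstep1 : alphaP a b a = 1 := by
    rw [alphaP, hinva, sub_self, phi, if_pos rfl, zero_add]
  have hmid : alphaP a b (alphaP a b a) = a → a = 1 ∨ b = -a := by
    intro h
    rw [hstep1, alphaP, hinv1] at h
    have heq : phi a b (a⁻¹ - 1) = a - 1 := eq_sub_of_add_eq h
    by_cases hz : a⁻¹ - 1 = 0
    · left
      have : a⁻¹ = 1 := by rwa [sub_eq_zero] at hz
      exact inv_eq_one.mp this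
    · by_cases hsq : IsSquare (a⁻¹ - 1)
      · rw [phi, if_neg hz, if_pos hsq] at heq
        left
        have h' : (2 : F) * (a - 1) = 0 := by
          linear_combination -heq + mul_inv_cancel₀ ha0
        have := (mul_eq_zero.mp h').resolve_left h2
        exact sub_eq_zero.mp this
      · rw [phi, if_neg hz, if_neg hsq] at heq
        right
        have h' : b * (1 - a) = (a - 1) * a := by
          linear_combination a * heq - b * (mul_inv_cancel₀ ha0)
        have hx : (a - 1) * (b + a) = 0 := by linear_combination -h'
        have := (mul_eq_zero.mp hx).resolve_left (sub_ne_zero.mpr ha1)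
        exact eq_neg_of_add_eq_zero_left this
        
  exact ⟨hstep1, hmid, fun _ _ hbna _ h => by
    rcases hmid h with h1 | h1
    · exact ha1 h1
    · exact hbna h1⟩
end

section
/- Let q ≡ 1 (mod 4) be a prime power, and let a ∈ F_q with a(2-a) a nonzero square, so that (a, 2-a) is a valid pair. Let φ = φ[a, 2-a] and α(j) = φ(φ^{-1}(j) - 1) + 1. If j ∈ F_q satisfies: aj and a^{-1}j - 1 are nonzero squares, and a(j - a + 1) and a(j - 1) are non-squares, then α(α(j)) = j. -/
lemma sq_mul_iff' {F : Type*} [Field F] [Fintype F] {x y : F} (hx : x ≠ 0) (hy : y ≠ 0) :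
    IsSquare (x * y) ↔ (IsSquare x ↔ IsSquare y) := by
  classical
  have hxy : x * y ≠ 0 := mul_ne_zero hx hy
  have hm : quadraticChar F (x * y) = quadraticChar F x * quadraticChar F y := map_mul _ _ _
  rcases quadraticChar_dichotomy hx with h1 | h1 <;>
    rcases quadraticChar_dichotomy hy with h2 | h2 <;>
  · rw [← quadraticChar_one_iff_isSquare hxy, ← quadraticChar_one_iff_isSquare hx,
      ← quadraticChar_one_iff_isSquare hy, hm, h1, h2]
    norm_num

lemma phi_inj {F : Type*} [Field F] [Fintype F] {a b : F} (hab : a * b ≠ 0)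
    (hs : IsSquare (a * b)) : Function.Injective (phi a b) := by
  have ha : a ≠ 0 := fun h => hab (by simp [h])
  have hb : b ≠ 0 := fun h => hab (by simp [h])
  intro x y hxy
  unfold phi at hxy
  by_cases hx : x = 0 <;> by_cases hy : y = 0
  · rw [hx, hy]
  · rw [if_pos hx, if_neg hy] at hxy
    split_ifs at hxy <;>
      [exact absurd hxy.symm (mul_ne_zero ha hy); exact absurd hxy.symm (mul_ne_zero hb hy)]
  · rw [if_neg hx, if_pos hy] at hxy
    split_ifs at hxy <;>
      [exact absurd hxy (mul_ne_zero ha hx); exact absurd hxy (mul_ne_zero hb hx)]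
  · rw [if_neg hx, if_neg hy] at hxy
    by_cases hsx : IsSquare x <;> by_cases hsy : IsSquare y
    · rw [if_pos hsx, if_pos hsy] at hxy; exact mul_left_cancel₀ ha hxy
    · rw [if_pos hsx, if_neg hsy] at hxy
      exfalso
      apply hsy
      have hy' : y = a * b⁻¹ * x := by
        apply mul_left_cancel₀ hb
        rw [← hxy, show b * (a * b⁻¹ * x) = b * b⁻¹ * (a * x) by ring,
          mul_inv_cancel₀ hb, one_mul]
      rw [hy']
      have hab' : IsSquare (a * b⁻¹) := by
        have h0 := (sq_mul_iff' ha hb).mp hs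
        have hbinv : IsSquare b ↔ IsSquare b⁻¹ :=
          ⟨fun h => by simpa using h.inv, fun h => by simpa using h.inv⟩
        exact (sq_mul_iff' ha (inv_ne_zero hb)).mpr (by rw [← hbinv]; exact h0)
      exact hab'.mul hsx
    · rw [if_neg hsx, if_pos hsy] at hxy
      exfalso
      apply hsx
      have hx' : x = a * b⁻¹ * y := by
        apply mul_left_cancel₀ hb
        rw [hxy, show b * (a * b⁻¹ * y) = b * b⁻¹ * (a * y) by ring,
          mul_inv_cancel₀ hb, one_mul]
      rw [hx']
      have hab' : IsSquare (a * b⁻¹) := by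
        have h0 := (sq_mul_iff' ha hb).mp hs
        have hbinv : IsSquare b ↔ IsSquare b⁻¹ :=
          ⟨fun h => by simpa using h.inv, fun h => by simpa using h.inv⟩
        exact (sq_mul_iff' ha (inv_ne_zero hb)).mpr (by rw [← hbinv]; exact h0)
      exact hab'.mul hsy
    · rw [if_neg hsx, if_neg hsy] at hxy; exact mul_left_cancel₀ hb hxy

lemma phi_sq {F : Type*} [Field F] {a b x : F} (hx : x ≠ 0) (hsx : IsSquare x) :
    phi a b x = a * x := by simp [phi, hx, hsx]

lemma phi_nsq {F : Type*} [Field F] {a b x : F} (hx : x ≠ 0) (hsx : ¬ IsSquare x) :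
    phi a b x = b * x := by simp [phi, hx, hsx]

/-- Lemma on `L[a, 2-a]`: for `q ≡ 1 (mod 4)` and `a(2-a)` a nonzero square,
if `aj` and `a⁻¹j - 1` are nonzero squares and `a(j-a+1)`, `a(j-1)` are
non-squares, then `α²(j) = j` for `α` the row permutation of `L[a, 2-a]`. -/
theorem stmt7 {F : Type*} [Field F] [Fintype F]
    (h4 : Fintype.card F % 4 = 1)
    (a : F) (ha : a * (2 - a) ≠ 0 ∧ IsSquare (a * (2 - a)))
    (j : F)
    (h1 : a * j ≠ 0 ∧ IsSquare (a * j))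
    (h2 : a⁻¹ * j - 1 ≠ 0 ∧ IsSquare (a⁻¹ * j - 1))
    (h3 : a * (j - a + 1) ≠ 0 ∧ ¬ IsSquare (a * (j - a + 1)))
    (h4' : a * (j - 1) ≠ 0 ∧ ¬ IsSquare (a * (j - 1))) :
    alphaP a (2 - a) (alphaP a (2 - a) j) = j := by
  classical
  have : Nonempty F := ⟨0⟩
  obtain ⟨hab0, habs⟩ := ha
  set b := 2 - a with hbdef
  have ha0 : a ≠ 0 := fun h => hab0 (by simp [h])
  have hb0 : b ≠ 0 := fun h => hab0 (by simp [h])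
  have inj := phi_inj hab0 habs
  have linv : ∀ x : F, Function.invFun (phi a b) (phi a b x) = x :=
    fun x => Function.leftInverse_invFun inj x
  have hj0 : j ≠ 0 := fun h => h1.1 (by simp [h])
  have hIab : IsSquare a ↔ IsSquare b := (sq_mul_iff' ha0 hb0).mp habs
  have hIainv : IsSquare a ↔ IsSquare a⁻¹ :=
    ⟨fun h => by simpa using h.inv, fun h => by simpa using h.inv⟩
  have hIbinv : IsSquare b ↔ IsSquare b⁻¹ :=
    ⟨fun h => by simpa using h.inv, fun h => by simpa using h.inv⟩
  -- step 1
  have hIj : IsSquare a ↔ IsSquare j := (sq_mul_iff' ha0 hj0).mp h1.2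
  have hpre1' : a⁻¹ * j ≠ 0 := mul_ne_zero (inv_ne_zero ha0) hj0
  have hpre1 : IsSquare (a⁻¹ * j) :=
    (sq_mul_iff' (inv_ne_zero ha0) hj0).mpr (hIainv.symm.trans hIj)
  have e1 : phi a b (a⁻¹ * j) = j := by
    rw [phi_sq hpre1' hpre1, ← mul_assoc, mul_inv_cancel₀ ha0, one_mul]
  have inv1 : Function.invFun (phi a b) j = a⁻¹ * j := by conv_lhs => rw [← e1, linv]
  have e2 : phi a b (a⁻¹ * j - 1) = j - a := by
    rw [phi_sq h2.1 h2.2, mul_sub, ← mul_assoc, mul_inv_cancel₀ ha0, one_mul, mul_one]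
  have step1 : alphaP a b j = j - a + 1 := by rw [alphaP, inv1, e2]
  -- step 2
  set j' := j - a + 1 with hj'
  have hj'0 : j' ≠ 0 := fun h => h3.1 (by rw [h, mul_zero])
  have hIj' : ¬(IsSquare a ↔ IsSquare j') := fun h => h3.2 ((sq_mul_iff' ha0 hj'0).mpr h)
  have hpre2' : b⁻¹ * j' ≠ 0 := mul_ne_zero (inv_ne_zero hb0) hj'0
  have hpre2 : ¬ IsSquare (b⁻¹ * j') := fun h => hIj'
    ((hIab.trans hIbinv).trans ((sq_mul_iff' (inv_ne_zero hb0) hj'0).mp h))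
  have e3 : phi a b (b⁻¹ * j') = j' := by
    rw [phi_nsq hpre2' hpre2, ← mul_assoc, mul_inv_cancel₀ hb0, one_mul]
  have inv2 : Function.invFun (phi a b) j' = b⁻¹ * j' := by conv_lhs => rw [← e3, linv]
  have hkey : b⁻¹ * j' - 1 = b⁻¹ * (j - 1) := by
    have : j' = (j - 1) + b := by rw [hj', hbdef]; ring
    rw [this, mul_add, mul_comm b⁻¹ b, mul_inv_cancel₀ hb0]; ring
  have hj10 : j - 1 ≠ 0 := fun h => h4'.1 (by rw [h, mul_zero])
  have hIj1 : ¬(IsSquare a ↔ IsSquare (j - 1)) := fun h => h4'.2 ((sq_mul_iff' ha0 hj10).mpr h)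
  have hne : b⁻¹ * (j - 1) ≠ 0 := mul_ne_zero (inv_ne_zero hb0) hj10
  have hns : ¬ IsSquare (b⁻¹ * (j - 1)) := fun h => hIj1
    ((hIab.trans hIbinv).trans ((sq_mul_iff' (inv_ne_zero hb0) hj10).mp h))
  have e4 : phi a b (b⁻¹ * (j - 1)) = j - 1 := by
    rw [phi_nsq hne hns, ← mul_assoc, mul_inv_cancel₀ hb0, one_mul]
  rw [step1, alphaP, inv2, hkey, e4]; ring
end

section
/- Let p be an odd prime, q a power of p, and (a,b) a valid pair in F_q^2 with a a non-square. Let φ = φ[a,b] and α(j) = φ(φ^{-1}(j)-1)+1. Suppose y ∈ F_q is such that y - ja + j and y - (j+1)a + j are non-squares for all j ∈ {0,1,...,p-1}. Then α^p(y) = y. -/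
section aux

variable {F : Type*} [Field F] [Fintype F]

lemma ns_mul_ns {x y : F} (hx0 : x ≠ 0) (hx : ¬ IsSquare x) (hy : ¬ IsSquare y) :
    IsSquare (x * y) := by
  classical
  rcases eq_or_ne y 0 with rfl | hy0
  · simp
  have h := quadraticChar_one_iff_isSquare (F := F) (mul_ne_zero hx0 hy0)
  rw [map_mul, quadraticChar_neg_one_iff_not_isSquare.mpr hx,
    quadraticChar_neg_one_iff_not_isSquare.mpr hy] at h
  exact h.mp (by ring)

lemma sq_mul_ns {x y : F} (hx0 : x ≠ 0) (hx : IsSquare x) (hy : ¬ IsSquare y) :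
    ¬ IsSquare (x * y) := by
  classical
  rcases eq_or_ne y 0 with rfl | hy0
  · exact absurd IsSquare.zero hy
  rw [← quadraticChar_neg_one_iff_not_isSquare, map_mul,
    (quadraticChar_one_iff_isSquare hx0).mpr hx,
    quadraticChar_neg_one_iff_not_isSquare.mpr hy]
  ring

omit [Fintype F] in
lemma ns_inv {x : F} (hx : ¬ IsSquare x) : ¬ IsSquare x⁻¹ := by
  intro h
  rcases eq_or_ne x 0 with rfl | hx0
  · exact hx IsSquare.zero
  · exact hx (by simpa [hx0] using h.inv)

lemma phi_injective {a b : F} (ha0 : a ≠ 0) (hb0 : b ≠ 0)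
    (ha : ¬ IsSquare a) (hb : ¬ IsSquare b) : Function.Injective (phi a b) := by
  intro x y hxy
  unfold phi at hxy
  rcases eq_or_ne x 0 with rfl | hx0 <;> rcases eq_or_ne y 0 with rfl | hy0
  · rfl
  · simp only [if_pos rfl, if_neg hy0] at hxy
    split_ifs at hxy <;>
      first
      | exact absurd hxy.symm (mul_ne_zero ha0 hy0)
      | exact absurd hxy.symm (mul_ne_zero hb0 hy0)
  · simp only [if_pos rfl, if_neg hx0] at hxy
    split_ifs at hxy <;>
      first
      | exact absurd hxy (mul_ne_zero ha0 hx0)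
      | exact absurd hxy (mul_ne_zero hb0 hx0)
  · simp only [if_neg hx0, if_neg hy0] at hxy
    by_cases hx : IsSquare x <;> by_cases hy : IsSquare y <;>
      simp only [hx, hy, if_pos, if_neg, if_true, if_false] at hxy
    · exact mul_left_cancel₀ ha0 hxy
    · -- a*x = b*y, x square nonzero, y nonsquare: contradiction
      have h1 : ¬ IsSquare (a * x) := by
        rw [mul_comm]; exact sq_mul_ns hx0 hx ha
      have h2 : IsSquare (b * y) := by
        rw [mul_comm]; exact ns_mul_ns hy0 hy hb
      exact absurd (hxy ▸ h2) h1
    · have h1 : ¬ IsSquare (a * y) := by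
        rw [mul_comm]; exact sq_mul_ns hy0 hy ha
      have h2 : IsSquare (b * x) := by
        rw [mul_comm]; exact ns_mul_ns hx0 hx hb
      exact absurd (hxy ▸ h1) (not_not_intro h2)
    · exact mul_left_cancel₀ hb0 hxy

/-- The key step: if `z` is a nonzero nonsquare and `z - a` is a nonzero nonsquare,
then `alphaP a b z = z - a + 1`. -/
lemma alphaP_eq {a b : F} (ha0 : a ≠ 0) (hb0 : b ≠ 0)
    (ha : ¬ IsSquare a) (hb : ¬ IsSquare b)
    {z : F} (hz0 : z ≠ 0) (hz : ¬ IsSquare z)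
    (hza0 : z - a ≠ 0) (hza : ¬ IsSquare (z - a)) :
    alphaP a b z = z - a + 1 := by
  have hinj := phi_injective ha0 hb0 ha hb
  have hsq : IsSquare (a⁻¹ * z) := ns_mul_ns (inv_ne_zero ha0) (ns_inv ha) hz
  have hne : a⁻¹ * z ≠ 0 := mul_ne_zero (inv_ne_zero ha0) hz0
  have hphi : phi a b (a⁻¹ * z) = z := by
    rw [phi, if_neg hne, if_pos hsq, ← mul_assoc, mul_inv_cancel₀ ha0, one_mul]
  have hinv : Function.invFun (phi a b) z = a⁻¹ * z := by
    conv_lhs => rw [← hphi]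
    exact Function.leftInverse_invFun hinj _
  have hsub : a⁻¹ * z - 1 = a⁻¹ * (z - a) := by
    field_simp
  have hsq2 : IsSquare (a⁻¹ * (z - a)) := ns_mul_ns (inv_ne_zero ha0) (ns_inv ha) hza
  have hne2 : a⁻¹ * (z - a) ≠ 0 := mul_ne_zero (inv_ne_zero ha0) hza0
  rw [alphaP, hinv, hsub, phi, if_neg hne2, if_pos hsq2, ← mul_assoc,
    mul_inv_cancel₀ ha0, one_mul]

end aux

/-- Let `F` be a field of odd characteristic `p` and `(a,b)` a valid pair with
`a` a non-square.  If `y - ja + j` and `y - (j+1)a + j` are non-squares for all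
`j ∈ {0, …, p-1}`, then `α^p(y) = y`. -/
theorem stmt11 {F : Type*} [Field F] [Fintype F]
    (p : ℕ) (hp : p.Prime) (hpodd : Odd p) (hchar : ringChar F = p)
    (a b : F)
    (hab : a * b ≠ 0 ∧ IsSquare (a * b))
    (hab1 : (a - 1) * (b - 1) ≠ 0 ∧ IsSquare ((a - 1) * (b - 1)))
    (ha : ¬ IsSquare a)
    (y : F)
    (hy : ∀ j : ℕ, j < p →
      (y - (j : F) * a + (j : F) ≠ 0 ∧ ¬ IsSquare (y - (j : F) * a + (j : F))) ∧
      (y - ((j : F) + 1) * a + (j : F) ≠ 0 ∧ ¬ IsSquare (y - ((j : F) + 1) * a + (j : F)))) :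
    (alphaP a b)^[p] y = y := by
  obtain ⟨hab0, habsq⟩ := hab
  have ha0 : a ≠ 0 := fun h => hab0 (by rw [h, zero_mul])
  have hb0 : b ≠ 0 := fun h => hab0 (by rw [h, mul_zero])
  have hb : ¬ IsSquare b := by
    intro hbsq
    apply ha
    have : a = (a * b) * b⁻¹ := by field_simp
    rw [this]
    exact habsq.mul (by simpa using hbsq.inv)
  -- key: α^[k] y = y - k * (a - 1), for k ≤ p
  have key : ∀ k : ℕ, k ≤ p → (alphaP a b)^[k] y = y - (k : F) * (a - 1) := by
    intro k
    induction k with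
    | zero => intro _; simp
    | succ n ih =>
      intro hn
      have hnp : n < p := Nat.lt_of_succ_le hn
      obtain ⟨⟨h10, h1⟩, ⟨h20, h2⟩⟩ := hy n hnp
      have e1 : y - (n : F) * (a - 1) = y - (n : F) * a + (n : F) := by ring
      have e2 : y - (n : F) * (a - 1) - a = y - ((n : F) + 1) * a + (n : F) := by ring
      rw [Function.iterate_succ_apply', ih (Nat.le_of_lt hnp),
        alphaP_eq ha0 hb0 ha hb (e1 ▸ h10) (e1 ▸ h1) (e2 ▸ h20) (e2 ▸ h2)]
      push_cast
      ring
  have hpzero : (p : F) = 0 := by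
    rw [← hchar]; exact ringChar.Nat.cast_ringChar
  rw [key p le_rfl, hpzero, zero_mul, sub_zero]
end

section
/- Let L and M be Latin squares. The set of lengths of row cycles of the direct product L × M equals R ∪ P ∪ {lcm(r, p) : r ∈ R, p ∈ P}, where R is the set of lengths of row cycles of L and P is the set of lengths of row cycles of M. -/
/-- The set of lengths of row cycles of a Latin square `L`: sizes of orbits of
row permutations `r_{i,j}` with `i ≠ j`. -/
def rowCycleLengths {S : Type*} (L : S → S → S) : Set ℕ :=
  {n | ∃ (i j : S) (r : Equiv.Perm S) (x : S), i ≠ j ∧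
    (∀ k, r (L i k) = L j k) ∧ n = Function.minimalPeriod (⇑r) x}

/-- The canonical row permutation sending row `i` to row `j`. -/
noncomputable def rowPerm {S : Type*} (L : S → S → S) (h : ∀ i, Function.Bijective (L i))
    (i j : S) : Equiv.Perm S :=
  (Equiv.ofBijective _ (h i)).symm.trans (Equiv.ofBijective _ (h j))

lemma rowPerm_spec {S : Type*} (L : S → S → S) (h : ∀ i, Function.Bijective (L i))
    (i j k : S) : rowPerm L h i j (L i k) = L j k := by
  simp only [rowPerm, Equiv.trans_apply]
  have : (Equiv.ofBijective _ (h i)).symm (L i k) = k := by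
    apply (Equiv.ofBijective _ (h i)).injective
    simp [Equiv.ofBijective_apply]
  rw [this]; rfl

lemma rowPerm_self {S : Type*} (L : S → S → S) (h : ∀ i, Function.Bijective (L i))
    (i : S) : ⇑(rowPerm L h i i) = id := by
  funext s
  obtain ⟨k, rfl⟩ := (h i).surjective s
  simp [rowPerm_spec]

/-- The set of lengths of row cycles of the direct product `L × M` equals
`R ∪ P ∪ {lcm(r,p) : r ∈ R, p ∈ P}`, where `R` and `P` are the sets of lengths
of row cycles of `L` and `M`. -/
theorem stmt13 {S T : Type*} [Fintype S] [Fintype T] [Nonempty S] [Nonempty T]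
    (L : S → S → S) (M : T → T → T)
    (hLrow : ∀ i, Function.Bijective (L i))
    (hLcol : ∀ j, Function.Bijective fun i => L i j)
    (hMrow : ∀ k, Function.Bijective (M k))
    (hMcol : ∀ l, Function.Bijective fun k => M k l) :
    rowCycleLengths (fun p q : S × T => (L p.1 q.1, M p.2 q.2)) =
      rowCycleLengths L ∪ rowCycleLengths M ∪
      {n | ∃ r ∈ rowCycleLengths L, ∃ p ∈ rowCycleLengths M, n = Nat.lcm r p} := by
  ext n
  constructor
  · rintro ⟨⟨a, b⟩, ⟨x, y⟩, r, ⟨s, t⟩, hne, hr, rfl⟩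
    -- r is forced to be the product map
    have hrprod : ⇑r = Prod.map ⇑(rowPerm L hLrow a x) ⇑(rowPerm M hMrow b y) := by
      funext p
      obtain ⟨p1, p2⟩ := p
      obtain ⟨k, rfl⟩ := (hLrow a).surjective p1
      obtain ⟨l, rfl⟩ := (hMrow b).surjective p2
      have := hr (k, l)
      simp only at this
      simp [this, Prod.map, rowPerm_spec]
    rw [hrprod, Function.minimalPeriod_prodMap]
    rcases eq_or_ne a x with rfl | hax
    · rcases eq_or_ne b y with rfl | hby
      · exact absurd rfl hne
      · left; right
        refine ⟨b, y, rowPerm M hMrow b y, t, hby, rowPerm_spec M hMrow b y, ?_⟩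
        rw [rowPerm_self, Function.minimalPeriod_id, Nat.lcm_one_left]
    · rcases eq_or_ne b y with rfl | hby
      · left; left
        refine ⟨a, x, rowPerm L hLrow a x, s, hax, rowPerm_spec L hLrow a x, ?_⟩
        rw [rowPerm_self, Function.minimalPeriod_id, Nat.lcm_one_right]
      · right
        exact ⟨_, ⟨a, x, rowPerm L hLrow a x, s, hax, rowPerm_spec L hLrow a x, rfl⟩,
          _, ⟨b, y, rowPerm M hMrow b y, t, hby, rowPerm_spec M hMrow b y, rfl⟩, rfl⟩
  · intro h
    simp only [rowCycleLengths, Set.mem_union, Set.mem_setOf_eq] at h ⊢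
    obtain ((⟨i, j, r, x, hij, hr, rfl⟩ | ⟨i, j, r, x, hij, hr, rfl⟩) |
      ⟨n₁, ⟨i, j, r, x, hij, hr, rfl⟩, n₂, ⟨k, l, m, y, hkl, hm, rfl⟩, rfl⟩) := h
    · obtain ⟨b⟩ := ‹Nonempty T›
      refine ⟨(i, b), (j, b), r.prodCongr (Equiv.refl T), (x, b), by simp [hij],
        fun q => by simp [hr q.1], ?_⟩
      have : ⇑(r.prodCongr (Equiv.refl T)) = Prod.map ⇑r id := rfl
      rw [this, Function.minimalPeriod_prodMap, Function.minimalPeriod_id,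
        Nat.lcm_one_right]
    · obtain ⟨a⟩ := ‹Nonempty S›
      refine ⟨(a, i), (a, j), (Equiv.refl S).prodCongr r, (a, x), by simp [hij],
        fun q => by simp [hr q.2], ?_⟩
      have : ⇑((Equiv.refl S).prodCongr r) = Prod.map id ⇑r := rfl
      rw [this, Function.minimalPeriod_prodMap, Function.minimalPeriod_id,
        Nat.lcm_one_left]
    · refine ⟨(i, k), (j, l), r.prodCongr m, (x, y), by simp [hij],
        fun q => by simp [hr q.1, hm q.2], ?_⟩
      have : ⇑(r.prodCongr m) = Prod.map ⇑r ⇑m := rfl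
      rw [this, Function.minimalPeriod_prodMap]
end

section
/- Let (X, B) be a pairwise balanced design and for each block B ∈ B let L^B be an idempotent Latin square on symbol set B. Define L on X by L_{i,i} = i and, for i ≠ j, L_{i,j} = L^B_{i,j} where B is the unique block containing {i,j}. If each L^B is involutory, then L is an involutory Latin square. -/
/-- PBD construction: given a pairwise balanced design `(X, Bs)` and an
idempotent Latin square `LB b` on each block `b`, the square `L` defined by
`L i i = i` and `L i j = LB b i j` (for the unique block `b` containing
`{i,j}`, `i ≠ j`) is a Latin square; if each `LB b` is involutory, so is `L`. -/
theorem stmt15 {X : Type*} (Bs : Set (Set X))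
    (hsize : ∀ b ∈ Bs, 3 ≤ b.ncard)
    (hpbd : ∀ i j : X, i ≠ j → ∃! b, b ∈ Bs ∧ i ∈ b ∧ j ∈ b)
    (LB : Set X → X → X → X)
    (hmem : ∀ b ∈ Bs, ∀ i ∈ b, ∀ j ∈ b, LB b i j ∈ b)
    (hrow : ∀ b ∈ Bs, ∀ i ∈ b, Set.BijOn (LB b i) b b)
    (hcol : ∀ b ∈ Bs, ∀ j ∈ b, Set.BijOn (fun i => LB b i j) b b)
    (hidem : ∀ b ∈ Bs, ∀ i ∈ b, LB b i i = i)
    (hinvB : ∀ b ∈ Bs, ∀ i ∈ b, ∀ j ∈ b, LB b i (LB b i j) = j)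
    (L : X → X → X)
    (hLd : ∀ i, L i i = i)
    (hL : ∀ i j, i ≠ j → ∀ b ∈ Bs, i ∈ b → j ∈ b → L i j = LB b i j) :
    (∀ i, Function.Bijective (L i)) ∧
    (∀ j, Function.Bijective fun i => L i j) ∧
    (∀ i j, L i (L i j) = j) := by
  have hinv : ∀ i j, L i (L i j) = j := by
    intro i j
    rcases eq_or_ne i j with rfl | hij
    · rw [hLd, hLd]
    · obtain ⟨b, ⟨hb, hib, hjb⟩, -⟩ := hpbd i j hij
      have hLij : L i j = LB b i j := hL i j hij b hb hib hjb
      have hk : LB b i j ∈ b := hmem b hb i hib j hjb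
      have hki : LB b i j ≠ i := by
        intro h
        exact hij ((hrow b hb i hib).injOn hjb hib (h.trans (hidem b hb i hib).symm)).symm
      rw [hLij, hL i _ (Ne.symm hki) b hb hib hk, hinvB b hb i hib j hjb]
  have hnej : ∀ i j, i ≠ j → L i j ≠ j := by
    intro i j hij
    obtain ⟨b, ⟨hb, hib, hjb⟩, -⟩ := hpbd i j hij
    rw [hL i j hij b hb hib hjb]
    intro h
    exact hij ((hcol b hb j hjb).injOn hib hjb (by rw [h, hidem b hb j hjb]))
  refine ⟨fun i => Function.Involutive.bijective (hinv i), ?_, hinv⟩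
  intro j
  constructor
  · intro i i' h
    simp only at h
    by_contra hne
    rcases eq_or_ne i j with rfl | hij
    · rw [hLd] at h
      exact hnej i' i (Ne.symm hne) h.symm
    rcases eq_or_ne i' j with rfl | hij'
    · rw [hLd] at h
      exact hnej i i' hne h
    obtain ⟨b, ⟨hb, hib, hjb⟩, -⟩ := hpbd i j hij
    obtain ⟨b', ⟨hb', hib', hjb'⟩, -⟩ := hpbd i' j hij'
    have hkj : LB b i j ≠ j := by rw [← hL i j hij b hb hib hjb]; exact hnej i j hij
    rw [hL i j hij b hb hib hjb, hL i' j hij' b' hb' hib' hjb'] at h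
    have hk : LB b i j ∈ b := hmem b hb i hib j hjb
    have hk' : LB b' i' j ∈ b' := hmem b' hb' i' hib' j hjb'
    obtain ⟨c, -, hc⟩ := hpbd (LB b i j) j hkj
    have hbb : b = b' := by
      exact (hc b ⟨hb, hk, hjb⟩).trans (hc b' ⟨hb', by rw [h]; exact hk', hjb'⟩).symm
    subst hbb
    exact hne ((hcol b hb j hjb).injOn hib hib' h)
  · intro k
    rcases eq_or_ne k j with rfl | hkj
    · exact ⟨k, hLd k⟩
    obtain ⟨b, ⟨hb, hjb, hkb⟩, -⟩ := hpbd j k (Ne.symm hkj)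
    obtain ⟨i, hib, hik⟩ := (hcol b hb j hjb).surjOn hkb
    simp only at hik
    have hij : i ≠ j := by
      rintro rfl
      rw [hidem b hb i hib] at hik
      exact hkj hik.symm
    exact ⟨i, by show L i j = k; rw [hL i j hij b hb hib hjb]; exact hik⟩
end

section
/- Let L be the Latin square obtained from a pairwise balanced design (X, B) via the PBD construction (using an idempotent Latin square L^B on each block B). For distinct i, j ∈ X, let B ∈ B be the unique block containing i and j. Then the row permutation r_{i,j} of L maps B to B; consequently, if |B| < |X| then r_{i,j} is not a single |X|-cycle. -/
lemma aux_minPeriod_le {X : Type*} [Fintype X] (r : Equiv.Perm X) (s : Set X)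
    (hs : r '' s = s) {x : X} (hx : x ∈ s) :
    Function.minimalPeriod (⇑r) x ≤ s.ncard := by
  have hmaps : ∀ y ∈ s, r y ∈ s := fun y hy => hs ▸ Set.mem_image_of_mem r hy
  have hiter : ∀ n, (⇑r)^[n] x ∈ s := by
    intro n; induction n with
    | zero => exact hx
    | succ n ih => rw [Function.iterate_succ_apply']; exact hmaps _ ih
  have hinj := Function.iterate_injOn_Iio_minimalPeriod (f := ⇑r) (x := x)
  have himg : ((⇑r)^[·] x) '' Set.Iio (Function.minimalPeriod (⇑r) x) ⊆ s := by
    rintro _ ⟨n, _, rfl⟩; exact hiter n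
  calc Function.minimalPeriod (⇑r) x
      = (Set.Iio (Function.minimalPeriod (⇑r) x)).ncard := by
        rw [← Finset.coe_Iio, Set.ncard_coe_finset, Nat.card_Iio]
    _ = (((⇑r)^[·] x) '' Set.Iio (Function.minimalPeriod (⇑r) x)).ncard :=
        (Set.ncard_image_of_injOn hinj).symm
    _ ≤ s.ncard := Set.ncard_le_ncard himg (Set.toFinite s)

/-- Let `L` be a Latin square obtained from the PBD construction, `i ≠ j`, and
`b` the unique block containing `i` and `j`.  Then the row permutation
`r_{i,j}` maps `b` onto `b`; consequently, if `|b| < |X|` then `r_{i,j}` is not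
a single `|X|`-cycle. -/
theorem stmt16 {X : Type*} [Fintype X] (Bs : Set (Set X))
    (hsize : ∀ b ∈ Bs, 3 ≤ b.ncard)
    (hpbd : ∀ i j : X, i ≠ j → ∃! b, b ∈ Bs ∧ i ∈ b ∧ j ∈ b)
    (LB : Set X → X → X → X)
    (hmem : ∀ b ∈ Bs, ∀ i ∈ b, ∀ j ∈ b, LB b i j ∈ b)
    (hrow : ∀ b ∈ Bs, ∀ i ∈ b, Set.BijOn (LB b i) b b)
    (hcol : ∀ b ∈ Bs, ∀ j ∈ b, Set.BijOn (fun i => LB b i j) b b)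
    (hidem : ∀ b ∈ Bs, ∀ i ∈ b, LB b i i = i)
    (L : X → X → X)
    (hLd : ∀ i, L i i = i)
    (hL : ∀ i j, i ≠ j → ∀ b ∈ Bs, i ∈ b → j ∈ b → L i j = LB b i j)
    (i j : X) (hij : i ≠ j)
    (r : Equiv.Perm X) (hr : ∀ k, r (L i k) = L j k)
    (b : Set X) (hb : b ∈ Bs) (hib : i ∈ b) (hjb : j ∈ b) :
    r '' b = b ∧
    (b.ncard < Fintype.card X →
      ∀ x : X, Function.minimalPeriod (⇑r) x ≠ Fintype.card X) := by
  have hLeq : ∀ x ∈ b, ∀ k ∈ b, L x k = LB b x k := by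
    intro x hx k hk
    rcases eq_or_ne x k with rfl | h
    · rw [hLd, hidem b hb x hx]
    · exact hL x k h b hb hx hk
  have hLi : L i '' b = b := by
    rw [Set.EqOn.image_eq (hLeq i hib)]
    exact (hrow b hb i hib).image_eq
  have hLj : L j '' b = b := by
    rw [Set.EqOn.image_eq (hLeq j hjb)]
    exact (hrow b hb j hjb).image_eq
  have h1 : r '' b = b := by
    conv_lhs => rw [← hLi]
    rw [← Set.image_comp]
    have : (⇑r ∘ L i) = L j := funext hr
    rw [this, hLj]
  refine ⟨h1, fun hlt x => ?_⟩
  by_cases hx : x ∈ b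
  · exact Nat.ne_of_lt (lt_of_le_of_lt (aux_minPeriod_le r b h1 hx) hlt)
  · have hcomp : r '' bᶜ = bᶜ := by
      rw [Set.image_compl_eq r.bijective, h1]
    have hle := aux_minPeriod_le r bᶜ hcomp hx
    have hbne : b.ncard ≠ 0 := by
      have := hsize b hb; omega
    have : bᶜ.ncard < Fintype.card X := by
      have h2 : bᶜ.ncard + b.ncard = Fintype.card X := by
        rw [Nat.add_comm]
        simpa using Set.ncard_add_ncard_compl b
      omega
    exact Nat.ne_of_lt (lt_of_le_of_lt hle this)
end

section
/- Let q be an odd prime power, p an odd prime dividing q, and (a,b) a valid pair with both a and b in the prime subfield F_p and both non-squares in F_q. Let α be the row permutation r_{0,1} of the quadratic Latin square L[a,b]. Then the orbit of 0 under α is contained in the prime subfield F_p; in particular, α has a cycle of length at most p. -/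
section aux
variable {F : Type*} [Field F] {a b : F}

lemma phi_zero (a b : F) : phi a b 0 = 0 := by simp [phi]

lemma phi_ne_zero (ha : a ≠ 0) (hb : b ≠ 0) {x : F} (hx : x ≠ 0) : phi a b x ≠ 0 := by
  unfold phi
  rw [if_neg hx]
  split <;> exact mul_ne_zero (by assumption) hx

lemma phi_inj_s18 (ha : a ≠ 0) (hans : ¬ IsSquare a) (hb : b ≠ 0) (hbns : ¬ IsSquare b)
    (hab : IsSquare (a*b)) : Function.Injective (phi a b) := by
  obtain ⟨s, hs⟩ := hab
  intro x y h
  by_cases hx : x = 0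
  · subst hx
    rw [phi_zero] at h
    by_contra hy
    exact phi_ne_zero ha hb (Ne.symm hy) h.symm
  by_cases hy : y = 0
  · subst hy
    rw [phi_zero] at h
    exact absurd h (phi_ne_zero ha hb hx)
  unfold phi at h
  rw [if_neg hx, if_neg hy] at h
  by_cases hxs : IsSquare x <;> by_cases hys : IsSquare y
  · rw [if_pos hxs, if_pos hys] at h; exact mul_left_cancel₀ ha h
  · rw [if_pos hxs, if_neg hys] at h
    obtain ⟨t, ht⟩ := hxs
    exfalso; apply hys
    refine ⟨s*t*b⁻¹, ?_⟩
    have key : (b*b) * y = (s*t)*(s*t) := by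
      linear_combination (-b)*h + (a*b)*ht + (t*t)*hs
    field_simp
    linear_combination key
  · rw [if_neg hxs, if_pos hys] at h
    obtain ⟨t, ht⟩ := hys
    exfalso; apply hxs
    refine ⟨s*t*b⁻¹, ?_⟩
    have key : (b*b) * x = (s*t)*(s*t) := by
      linear_combination b*h + (a*b)*ht + (t*t)*hs
    field_simp
    linear_combination key
  · rw [if_neg hxs, if_neg hys] at h; exact mul_left_cancel₀ hb h

end aux


/-- Let `q = p^d` with `p` an odd prime, and `(a,b)` a valid pair with both `a`
and `b` in the prime subfield and both non-squares in `F_q`.  Then the orbit of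
`0` under the row permutation `α = r_{0,1}` of `L[a,b]` is contained in the
prime subfield; in particular `α` has a cycle of length at most `p`. -/
theorem stmt18 {F : Type*} [Field F] [Fintype F]
    (p : ℕ) (hp : p.Prime) (hpodd : Odd p) (hchar : ringChar F = p)
    (a b : F)
    (haP : ∃ m : ℕ, (m : F) = a) (hbP : ∃ m : ℕ, (m : F) = b)
    (hans : a ≠ 0 ∧ ¬ IsSquare a) (hbns : b ≠ 0 ∧ ¬ IsSquare b)
    (hab : a * b ≠ 0 ∧ IsSquare (a * b))
    (hab1 : (a - 1) * (b - 1) ≠ 0 ∧ IsSquare ((a - 1) * (b - 1))) :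
    (∀ k : ℕ, ∃ m : ℕ, (m : F) = (alphaP a b)^[k] 0) ∧
    (∃ c : ℕ, 0 < c ∧ c ≤ p ∧ (alphaP a b)^[c] 0 = 0) := by
  obtain ⟨ha, hans⟩ := hans
  obtain ⟨hb, hbns⟩ := hbns
  haveI : CharP F p := hchar ▸ ringChar.charP F
  haveI : Fact p.Prime := ⟨hp⟩
  set f : ZMod p →+* F := ZMod.castHom dvd_rfl F with hf
  have hinj : Function.Injective (phi a b) := phi_inj_s18 ha hans hb hbns hab.2
  have hbij : Function.Bijective (phi a b) := (Finite.injective_iff_bijective).1 hinj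
  have hli : Function.LeftInverse (Function.invFun (phi a b)) (phi a b) :=
    Function.leftInverse_invFun hinj
  have hri : Function.RightInverse (Function.invFun (phi a b)) (phi a b) :=
    Function.rightInverse_invFun hbij.2
  set K := f.fieldRange with hK
  have haK : a ∈ K := by
    obtain ⟨m, hm⟩ := haP
    exact hm ▸ natCast_mem K m
  have hbK : b ∈ K := by
    obtain ⟨m, hm⟩ := hbP
    exact hm ▸ natCast_mem K m
  have hstep : ∀ j ∈ K, alphaP a b j ∈ K := by
    intro j hj
    have hxK : Function.invFun (phi a b) j ∈ K := by
      set x := Function.invFun (phi a b) j with hxdef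
      have hpx : phi a b x = j := hri j
      by_cases hx0 : x = 0
      · rw [hx0]; exact zero_mem K
      unfold phi at hpx
      rw [if_neg hx0] at hpx
      split at hpx
      · have : x = a⁻¹ * j := by rw [← hpx, inv_mul_cancel_left₀ ha]
        rw [this]; exact mul_mem (inv_mem haK) hj
      · have : x = b⁻¹ * j := by rw [← hpx, inv_mul_cancel_left₀ hb]
        rw [this]; exact mul_mem (inv_mem hbK) hj
    have h1 : Function.invFun (phi a b) j - 1 ∈ K := sub_mem hxK (one_mem K)
    have h2 : phi a b (Function.invFun (phi a b) j - 1) ∈ K := by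
      unfold phi
      split
      · exact zero_mem K
      split
      · exact mul_mem haK h1
      · exact mul_mem hbK h1
    exact add_mem h2 (one_mem K)
  have horbit : ∀ k : ℕ, (alphaP a b)^[k] 0 ∈ K := by
    intro k
    induction k with
    | zero => exact zero_mem K
    | succ n ih => rw [Function.iterate_succ_apply']; exact hstep _ ih
  have hcast : ∀ z ∈ K, ∃ m : ℕ, (m : F) = z := by
    intro z hz
    obtain ⟨u, hu⟩ := hz
    exact ⟨u.val, by rw [← hu]; simp [hf]⟩
  constructor
  · intro k; exact hcast _ (horbit k)
  · -- pigeonhole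
    have hchoice : ∀ i : Fin (p+1), ∃ u : ZMod p, f u = (alphaP a b)^[i] 0 := by
      intro i; exact horbit i
    choose u hu using hchoice
    have hcard : Fintype.card (ZMod p) < Fintype.card (Fin (p+1)) := by
      simp [ZMod.card]
    obtain ⟨i, j, hij, huij⟩ := Fintype.exists_ne_map_eq_of_card_lt u hcard
    have heq : (alphaP a b)^[i] 0 = (alphaP a b)^[j] 0 := by
      rw [← hu i, ← hu j, huij]
    have hαinj : Function.Injective (alphaP a b) := by
      intro x y h
      unfold alphaP at h
      have h1 := add_right_cancel h
      have h2 := hinj h1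
      have h3 : Function.invFun (phi a b) x = Function.invFun (phi a b) y :=
        sub_left_inj.mp h2
      calc x = phi a b (Function.invFun (phi a b) x) := (hri x).symm
        _ = phi a b (Function.invFun (phi a b) y) := by rw [h3]
        _ = y := hri y
    have key : ∀ i j : Fin (p+1), (i : ℕ) < (j : ℕ) →
        (alphaP a b)^[(i : ℕ)] 0 = (alphaP a b)^[(j : ℕ)] 0 →
        ∃ c : ℕ, 0 < c ∧ c ≤ p ∧ (alphaP a b)^[c] 0 = 0 := by
      intro i j hlt heq
      refine ⟨(j : ℕ) - (i : ℕ), by omega, by omega, ?_⟩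
      have hji : (j : ℕ) = (i : ℕ) + ((j : ℕ) - (i : ℕ)) := by omega
      rw [hji, Function.iterate_add_apply] at heq
      exact (Function.Injective.iterate hαinj (i : ℕ)) heq.symm
    rcases lt_or_gt_of_ne (fun h : (i : ℕ) = (j : ℕ) => hij (Fin.ext h)) with hlt | hlt
    · exact key i j hlt heq
    · exact key j i hlt heq.symm
end
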